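/- For the basis functions χ_i(x) = L_i(x) − L_{i+2}(x), the weighted mass integrals c_{ij} = ∫_{−1}^{1} χ_j(x) χ_i(x) (x+1) dx satisfy: c_{ii} = 2/(2i+1) + 2/(2i+5), c_{i,i+1} = 2/((2i+1)(2i+5)) + 2(i+3)/((2i+5)(2i+7)), c_{i,i+2} = −2/(2i+5), c_{i,i+3} = −2(i+3)/((2i+5)(2i+7)), and c_{ij} = 0 for |i − j| ≥ 4. -/

import Mathlib

/-!
Expanding `χ_j χ_i (x + 1)` reduces every entry to the integrals `∫ L_a L_b` and `∫ x L_a L_b`.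
By Rodrigues' formula and `n`-fold integration by parts (the derivatives of `(x² - 1)ⁿ` of
order `< n` vanish at `±1`), `∫ L_n g = g_n · 2ⁿ⁺¹ (n!)² / (2n+1)!` whenever `deg g ≤ n`,
where `g_n` is the coefficient of `xⁿ` in `g`. This gives orthogonality, `∫ L_n² = 2 / (2n+1)`
and `∫ L_{n+1} x L_n = 2(n+1) / ((2n+1)(2n+3))`; the remaining moment `∫ x L_n²` vanishes
because `L_n` has the parity of `n`.
-/

open Polynomial intervalIntegral

/-- The `n`-th Legendre polynomial via Rodrigues' formula. -/
noncomputable def legendre (n : ℕ) : Polynomial ℝ :=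
  Polynomial.C ((2 ^ n * n.factorial : ℝ)⁻¹) * Polynomial.derivative^[n] ((X ^ 2 - 1) ^ n)

/-- χ_i = L_i − L_{i+2}. -/
noncomputable def chi (i : ℕ) : Polynomial ℝ := legendre i - legendre (i + 2)

/-- c_{ij} = ∫_{-1}^1 χ_j χ_i (x+1) dx. -/
noncomputable def cMat (i j : ℕ) : ℝ :=
  ∫ x in (-1 : ℝ)..1, (chi j).eval x * (chi i).eval x * (x + 1)

noncomputable def polyIntegral (a b : ℝ) : ℝ[X] →ₗ[ℝ] ℝ where
  toFun p := ∫ x in a..b, p.eval x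
  map_add' p q := by
    simpa only [eval_add] using
      integral_add (p.continuous.intervalIntegrable a b) (q.continuous.intervalIntegrable a b)
  map_smul' c p := by simp only [eval_smul, smul_eq_mul, integral_const_mul, RingHom.id_apply]

section PolyIntegral

variable {a b : ℝ}

theorem polyIntegral_apply (p : ℝ[X]) : polyIntegral a b p = ∫ x in a..b, p.eval x := rfl

theorem polyIntegral_C_mul (c : ℝ) (p : ℝ[X]) :
    polyIntegral a b (C c * p) = c * polyIntegral a b p := by
  rw [← smul_eq_C_mul, map_smul, smul_eq_mul]

theorem polyIntegral_derivative (p : ℝ[X]) :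
    polyIntegral a b (derivative p) = p.eval b - p.eval a :=
  integral_deriv_eq_sub' _ (funext fun _ => p.deriv) (fun _ _ => p.differentiableAt)
    (derivative p).continuous.continuousOn

theorem polyIntegral_derivative_mul {f : ℝ[X]} (ha : f.eval a = 0) (hb : f.eval b = 0)
    (g : ℝ[X]) : polyIntegral a b (derivative f * g) = -polyIntegral a b (f * derivative g) := by
  have h := polyIntegral_derivative (a := a) (b := b) (f * g)
  rw [derivative_mul, map_add, eval_mul, eval_mul, ha, hb, zero_mul, zero_mul, sub_zero] at h
  linarith

theorem polyIntegral_iterate_derivative_mul {n : ℕ} {f : ℝ[X]}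
    (hf : ∀ k < n, (derivative^[k] f).eval a = 0 ∧ (derivative^[k] f).eval b = 0) (g : ℝ[X]) :
    polyIntegral a b (derivative^[n] f * g)
      = (-1) ^ n * polyIntegral a b (f * derivative^[n] g) := by
  induction n generalizing g with
  | zero => simp
  | succ n ih =>
    obtain ⟨ha, hb⟩ := hf n n.lt_succ_self
    rw [Function.iterate_succ_apply', polyIntegral_derivative_mul ha hb,
      ih (fun k hk => hf k (hk.trans n.lt_succ_self)), ← Function.iterate_succ_apply, pow_succ]
    ring

theorem polyIntegral_eq_zero_of_comp_neg_X {p : ℝ[X]} (hp : p.comp (-X) = -p) :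
    polyIntegral (-a) a p = 0 := by
  have h := integral_comp_neg (a := -a) (b := a) (fun x => p.eval x)
  have hodd : ∀ x, p.eval (-x) = -p.eval x := fun x => by
    simpa using congrArg (eval x) hp
  simp only [hodd, integral_neg, neg_neg] at h
  rw [polyIntegral_apply]
  linarith

end PolyIntegral

section Rodrigues

variable {R : Type*} [CommRing R]

theorem eval_iterate_derivative_X_sq_sub_one_pow {n k : ℕ} (hk : k < n) {x : R} (hx : x ^ 2 = 1) :
    (derivative^[k] ((X ^ 2 - 1 : R[X]) ^ n)).eval x = 0 := by
  obtain ⟨q, hq⟩ := pow_sub_dvd_iterate_derivative_pow (X ^ 2 - 1 : R[X]) n k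
  rw [hq, eval_mul, eval_pow, eval_sub, eval_pow, eval_X, eval_one, hx, sub_self,
    zero_pow (Nat.sub_ne_zero_of_lt hk), zero_mul]

theorem derivative_X_mul_X_sq_sub_one_pow_succ (n : ℕ) :
    derivative (X * (X ^ 2 - 1 : R[X]) ^ (n + 1))
      = C (2 * n + 3 : R) * (X ^ 2 - 1) ^ (n + 1) + C (2 * n + 2 : R) * (X ^ 2 - 1) ^ n := by
  simp only [derivative_mul, derivative_X, derivative_pow, derivative_sub,
    derivative_one, map_add, map_mul, map_natCast, map_ofNat]
  push_cast
  ring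

theorem iterate_derivative_comp_neg_X (p : R[X]) (k : ℕ) :
    derivative^[k] (p.comp (-X)) = (-1) ^ k * (derivative^[k] p).comp (-X) := by
  induction k generalizing p with
  | zero => simp
  | succ k ih => simp [ih (derivative p), derivative_comp, pow_succ]

theorem iterate_derivative_eq_C_of_natDegree_le {p : R[X]} {n : ℕ} (hp : p.natDegree ≤ n) :
    derivative^[n] p = C (n.factorial * p.coeff n) := by
  rw [eq_C_of_natDegree_le_zero ((natDegree_iterate_derivative p n).trans (by omega)),
    coeff_iterate_derivative, zero_add, Nat.descFactorial_self, nsmul_eq_mul]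

end Rodrigues

theorem polyIntegral_X_sq_sub_one_pow (n : ℕ) :
    polyIntegral (-1) 1 ((X ^ 2 - 1) ^ n)
      = (-1) ^ n * 2 ^ (2 * n + 1) * (n.factorial : ℝ) ^ 2 / (2 * n + 1).factorial := by
  induction n with
  | zero => norm_num [polyIntegral_apply]
  | succ n ih =>
    have hrec : (2 * n + 3 : ℝ) * polyIntegral (-1) 1 ((X ^ 2 - 1) ^ (n + 1))
        + (2 * n + 2) * polyIntegral (-1) 1 ((X ^ 2 - 1) ^ n) = 0 := by
      rw [← polyIntegral_C_mul, ← polyIntegral_C_mul, ← map_add,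
        ← derivative_X_mul_X_sq_sub_one_pow_succ, polyIntegral_derivative]
      norm_num
    rw [ih] at hrec
    have hfact : ((2 * n + 1).factorial : ℝ) ≠ 0 := by positivity
    field_simp at hrec
    rw [show 2 * (n + 1) + 1 = 2 * n + 1 + 1 + 1 by ring, Nat.factorial_succ, Nat.factorial_succ,
      Nat.factorial_succ]
    push_cast
    field_simp
    linear_combination (2 * (n : ℝ) + 2) * hrec

theorem natDegree_X_sq_sub_one_pow (n : ℕ) : ((X ^ 2 - 1 : ℝ[X]) ^ n).natDegree = 2 * n := by
  rw [natDegree_pow, ← C_1, natDegree_X_pow_sub_C, mul_comm]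

theorem natDegree_legendre_le (n : ℕ) : (legendre n).natDegree ≤ n :=
  (natDegree_C_mul_le _ _).trans <| (natDegree_iterate_derivative _ _).trans <| by
    rw [natDegree_X_sq_sub_one_pow]; omega

theorem coeff_legendre_self (n : ℕ) :
    (legendre n).coeff n = ((2 * n).factorial : ℝ) / (2 ^ n * n.factorial * n.factorial) := by
  have hmonic : ((X ^ 2 - 1 : ℝ[X]) ^ n).Monic := (monic_X_pow_sub_C (1 : ℝ) two_ne_zero).pow n
  have htop : ((X ^ 2 - 1 : ℝ[X]) ^ n).coeff (n + n) = 1 := by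
    rw [← hmonic.coeff_natDegree, natDegree_X_sq_sub_one_pow, two_mul]
  have hdesc : (n.factorial * (n + n).descFactorial n : ℝ) = (2 * n).factorial := by
    rw [two_mul, ← Nat.factorial_mul_descFactorial (Nat.le_add_left n n), Nat.add_sub_cancel]
    push_cast
    ring
  rw [legendre, coeff_C_mul, coeff_iterate_derivative, htop, nsmul_eq_mul, mul_one, ← hdesc]
  field_simp

theorem legendre_comp_neg_X (n : ℕ) : (legendre n).comp (-X) = (-1) ^ n * legendre n := by
  have hsymm : ((X ^ 2 - 1 : ℝ[X]) ^ n).comp (-X) = (X ^ 2 - 1) ^ n := by simp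
  have h := iterate_derivative_comp_neg_X ((X ^ 2 - 1 : ℝ[X]) ^ n) n
  rw [hsymm] at h
  have hcomp : (derivative^[n] ((X ^ 2 - 1 : ℝ[X]) ^ n)).comp (-X)
      = (-1) ^ n * derivative^[n] ((X ^ 2 - 1) ^ n) := by
    conv_rhs => rw [h, ← mul_assoc, ← mul_pow, neg_one_mul, neg_neg, one_pow, one_mul]
  rw [legendre, mul_comp, C_comp, hcomp, mul_left_comm]

theorem polyIntegral_legendre_mul {n : ℕ} {g : ℝ[X]} (hg : g.natDegree ≤ n) :
    polyIntegral (-1) 1 (legendre n * g)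
      = g.coeff n * (2 ^ (n + 1) * n.factorial ^ 2 / (2 * n + 1).factorial) := by
  have hvanish : ∀ k < n, (derivative^[k] ((X ^ 2 - 1 : ℝ[X]) ^ n)).eval (-1) = 0 ∧
      (derivative^[k] ((X ^ 2 - 1 : ℝ[X]) ^ n)).eval 1 = 0 := fun k hk =>
    ⟨eval_iterate_derivative_X_sq_sub_one_pow hk (by norm_num),
      eval_iterate_derivative_X_sq_sub_one_pow hk (one_pow 2)⟩
  rw [legendre, mul_assoc, polyIntegral_C_mul, polyIntegral_iterate_derivative_mul hvanish,
    iterate_derivative_eq_C_of_natDegree_le hg, mul_comm _ (C _), polyIntegral_C_mul,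
    polyIntegral_X_sq_sub_one_pow]
  field_simp
  rw [sq, pow_mul_pow_eq_one n (by norm_num : (-1 : ℝ) * -1 = 1)]
  ring

theorem polyIntegral_legendre_mul_of_natDegree_lt {n : ℕ} {g : ℝ[X]} (hg : g.natDegree < n) :
    polyIntegral (-1) 1 (legendre n * g) = 0 := by
  rw [polyIntegral_legendre_mul hg.le, coeff_eq_zero_of_natDegree_lt hg, zero_mul]

theorem polyIntegral_legendre_mul_legendre (a b : ℕ) :
    polyIntegral (-1) 1 (legendre a * legendre b)
      = if a = b then (2 : ℝ) / (2 * a + 1) else 0 := by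
  rcases lt_trichotomy a b with h | rfl | h
  · rw [mul_comm, if_neg h.ne,
      polyIntegral_legendre_mul_of_natDegree_lt ((natDegree_legendre_le a).trans_lt h)]
  · rw [if_pos rfl, polyIntegral_legendre_mul (natDegree_legendre_le a), coeff_legendre_self,
      Nat.factorial_succ]
    push_cast
    field_simp
    ring
  · rw [if_neg h.ne',
      polyIntegral_legendre_mul_of_natDegree_lt ((natDegree_legendre_le b).trans_lt h)]

theorem natDegree_X_mul_legendre_le (n : ℕ) : (X * legendre n).natDegree ≤ n + 1 :=
  natDegree_mul_le.trans (add_comm 1 n ▸ add_le_add natDegree_X_le (natDegree_legendre_le n))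

theorem polyIntegral_legendre_succ_mul_X_mul_legendre (n : ℕ) :
    polyIntegral (-1) 1 (legendre (n + 1) * (X * legendre n))
      = 2 * (n + 1) / ((2 * n + 1) * (2 * n + 3)) := by
  rw [polyIntegral_legendre_mul (natDegree_X_mul_legendre_le n), coeff_X_mul, coeff_legendre_self,
    show 2 * (n + 1) + 1 = 2 * n + 1 + 1 + 1 by ring, Nat.factorial_succ, Nat.factorial_succ,
    Nat.factorial_succ, Nat.factorial_succ]
  push_cast
  field_simp
  ring

theorem polyIntegral_legendre_mul_X_mul_legendre_self (n : ℕ) :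
    polyIntegral (-1) 1 (legendre n * (X * legendre n)) = 0 := by
  have hodd : (legendre n * (X * legendre n)).comp (-X) = -(legendre n * (X * legendre n)) := by
    rw [mul_comp, mul_comp, X_comp, legendre_comp_neg_X]
    linear_combination
      (-(X * legendre n ^ 2)) * pow_mul_pow_eq_one n (by norm_num : (-1 : ℝ[X]) * -1 = 1)
  exact polyIntegral_eq_zero_of_comp_neg_X hodd

theorem polyIntegral_X_mul_legendre_mul_legendre (a b : ℕ) :
    polyIntegral (-1) 1 (X * legendre a * legendre b) =
      if b = a + 1 then (2 : ℝ) * (a + 1) / ((2 * a + 1) * (2 * a + 3))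
      else if a = b + 1 then (2 : ℝ) * (b + 1) / ((2 * b + 1) * (2 * b + 3)) else 0 := by
  by_cases hb : b = a + 1
  · rw [if_pos hb, hb, ← polyIntegral_legendre_succ_mul_X_mul_legendre]
    congr 1
    ring
  by_cases ha : a = b + 1
  · rw [if_neg hb, if_pos ha, ha, ← polyIntegral_legendre_succ_mul_X_mul_legendre]
    congr 1
    ring
  rw [if_neg hb, if_neg ha]
  rcases lt_trichotomy a b with h | rfl | h
  · rw [show X * legendre a * legendre b = legendre b * (X * legendre a) by ring]
    exact polyIntegral_legendre_mul_of_natDegree_lt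
      ((natDegree_X_mul_legendre_le a).trans_lt (by omega))
  · rw [← polyIntegral_legendre_mul_X_mul_legendre_self a]
    congr 1
    ring
  · rw [show X * legendre a * legendre b = legendre a * (X * legendre b) by ring]
    exact polyIntegral_legendre_mul_of_natDegree_lt
      ((natDegree_X_mul_legendre_le b).trans_lt (by omega))

noncomputable def legendreWeightedGram (a b : ℕ) : ℝ :=
  polyIntegral (-1) 1 (legendre a * legendre b * (X + 1))

theorem legendreWeightedGram_eq (a b : ℕ) :
    legendreWeightedGram a b =
      (if a = b then (2 : ℝ) / (2 * a + 1) else 0) +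
      (if b = a + 1 then (2 : ℝ) * (a + 1) / ((2 * a + 1) * (2 * a + 3))
        else if a = b + 1 then (2 : ℝ) * (b + 1) / ((2 * b + 1) * (2 * b + 3)) else 0) := by
  rw [legendreWeightedGram, ← polyIntegral_legendre_mul_legendre,
    ← polyIntegral_X_mul_legendre_mul_legendre, ← map_add]
  congr 1
  ring

theorem cMat_eq_legendreWeightedGram (i j : ℕ) :
    cMat i j = legendreWeightedGram j i - legendreWeightedGram j (i + 2)
      - legendreWeightedGram (j + 2) i + legendreWeightedGram (j + 2) (i + 2) := by
  have hpoly : cMat i j = polyIntegral (-1) 1 (chi j * chi i * (X + 1)) := by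
    simp only [cMat, polyIntegral_apply, eval_mul, eval_add, eval_X, eval_one]
  simp only [hpoly, legendreWeightedGram, ← map_sub, ← map_add]
  congr 1
  simp only [chi]
  ring

theorem legendreWeightedGram_eq_zero {a b : ℕ} (h : a + 1 < b ∨ b + 1 < a) :
    legendreWeightedGram a b = 0 := by
  rw [legendreWeightedGram_eq, if_neg, if_neg, if_neg, add_zero] <;> omega

theorem cMat_eq_zero_of_four_le_abs_sub {i j : ℕ} (h : 4 ≤ |(i : ℤ) - j|) : cMat i j = 0 := by
  rw [le_abs'] at h
  rw [cMat_eq_legendreWeightedGram, legendreWeightedGram_eq_zero, legendreWeightedGram_eq_zero,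
    legendreWeightedGram_eq_zero, legendreWeightedGram_eq_zero, sub_self, sub_self, add_zero]
  all_goals omega

theorem weighted_mass_entries (i j : ℕ) :
    cMat i i = 2 / (2 * (i : ℝ) + 1) + 2 / (2 * (i : ℝ) + 5) ∧
    cMat i (i + 1) = 2 / ((2 * (i : ℝ) + 1) * (2 * (i : ℝ) + 5))
      + 2 * ((i : ℝ) + 3) / ((2 * (i : ℝ) + 5) * (2 * (i : ℝ) + 7)) ∧
    cMat i (i + 2) = -2 / (2 * (i : ℝ) + 5) ∧
    cMat i (i + 3) = -(2 * ((i : ℝ) + 3)) / ((2 * (i : ℝ) + 5) * (2 * (i : ℝ) + 7)) ∧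
    (4 ≤ |(i : ℤ) - (j : ℤ)| → cMat i j = 0) := by
  refine ⟨?_, ?_, ?_, ?_, cMat_eq_zero_of_four_le_abs_sub⟩ <;>
  · simp only [cMat_eq_legendreWeightedGram, legendreWeightedGram_eq]
    norm_num [add_assoc]
    field_simp
    ring
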